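/- arXiv:1301.2342 — 2 statements merged into one kernel-verified Lean document; each statement's English description precedes it below -/
import Mathlib

section
/- Pebble equivalence is transitive: let S be a configuration of p pebbles on a connected graph G, and suppose pebbles i and j are equivalent with respect to S, and pebbles j and k are equivalent with respect to S. Then pebbles i and k are equivalent with respect to S. -/
/-- A single pebble move: configurations `S`, `S'` (injective maps of pebbles to
vertices) differ at exactly one pebble `i`, which moves along an edge of `G`
to a vertex unoccupied in `S`. -/
def Move {V : Type*} (G : SimpleGraph V) {p : ℕ} (S S' : Fin p → V) : Prop :=
  Function.Injective S ∧ Function.Injective S' ∧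
    ∃ i : Fin p, G.Adj (S i) (S' i) ∧ (∀ j, j ≠ i → S' j = S j) ∧ ∀ j, S j ≠ S' i

/-- Reachability: reflexive-transitive closure of the move relation. -/
def Reach {V : Type*} (G : SimpleGraph V) {p : ℕ} (S S' : Fin p → V) : Prop :=
  Relation.ReflTransGen (Move G) S S'

/-- Pebbles `i`, `j` are equivalent w.r.t. `S` if the configuration equal to `S`
with the positions of `i` and `j` swapped (all other pebbles unchanged) is
reachable from `S`. -/
def PebEquiv {V : Type*} (G : SimpleGraph V) {p : ℕ} (S : Fin p → V) (i j : Fin p) : Prop :=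
  Reach G S (S ∘ Equiv.swap i j)

/-- The cycle graph on `n` vertices `v_0, …, v_{n-1}`, with edges `(v_j, v_{j+1 mod n})`. -/
def cycleGraph (n : ℕ) : SimpleGraph (ZMod n) :=
  SimpleGraph.fromRel (fun a b => b = a + 1)

/-!
Relabelling pebbles by a permutation maps moves to moves, so the permutations `σ` with `S ∘ σ`
reachable from `S` are closed under products: follow `S ⇝ S ∘ σ` by the relabelled copy
`S ∘ σ ⇝ S ∘ τ ∘ σ` of `S ⇝ S ∘ τ`. For distinct `i, j, k` the transposition `(i k)` is the
product `(j k)(i j)(j k)`.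
-/

section Relabel

variable {V : Type*} {G : SimpleGraph V} {p : ℕ}

theorem Move.comp_perm {S S' : Fin p → V} (h : Move G S S') (σ : Equiv.Perm (Fin p)) :
    Move G (S ∘ σ) (S' ∘ σ) := by
  obtain ⟨hS, hS', i, hadj, hfix, hfree⟩ := h
  refine ⟨hS.comp σ.injective, hS'.comp σ.injective, σ.symm i, ?_, fun m hm => ?_,
    fun m => ?_⟩
  · simpa using hadj
  · exact hfix (σ m) fun h => hm (σ.eq_symm_apply.mpr h)
  · simpa using hfree (σ m)

theorem Reach.comp_perm {S S' : Fin p → V} (h : Reach G S S') (σ : Equiv.Perm (Fin p)) :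
    Reach G (S ∘ σ) (S' ∘ σ) :=
  Relation.ReflTransGen.lift (· ∘ σ) (fun _ _ (hm : Move G _ _) => hm.comp_perm σ) _ _ h

theorem Reach.comp_mul {S : Fin p → V} {σ τ : Equiv.Perm (Fin p)}
    (hσ : Reach G S (S ∘ σ)) (hτ : Reach G S (S ∘ τ)) : Reach G S (S ∘ ⇑(τ * σ)) :=
  Relation.ReflTransGen.trans hσ (hτ.comp_perm σ)

end Relabel

theorem stmt_4_general {V : Type*} (G : SimpleGraph V) {p : ℕ}
    (S : Fin p → V) (i j k : Fin p)
    (hij : PebEquiv G S i j) (hjk : PebEquiv G S j k) :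
    PebEquiv G S i k := by
  by_cases hik_eq : i = k
  · subst hik_eq
    simp only [PebEquiv, Equiv.swap_self, Equiv.coe_refl, Function.comp_id]
    exact Relation.ReflTransGen.refl
  by_cases hij_eq : i = j
  · exact hij_eq ▸ hjk
  by_cases hjk_eq : j = k
  · exact hjk_eq ▸ hij
  have hswap : Equiv.swap j k * Equiv.swap i j * Equiv.swap j k = Equiv.swap i k := by
    rw [Equiv.swap_mul_swap_mul_swap hij_eq hik_eq, Equiv.swap_comm]
  unfold PebEquiv at *
  rw [← hswap]
  exact (hjk.comp_mul hij).comp_mul hjk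

/-- pebble equivalence is transitive. -/
theorem stmt_4 {V : Type*} (G : SimpleGraph V) (hG : G.Connected) {p : ℕ}
    (S : Fin p → V) (hS : Function.Injective S) (i j k : Fin p)
    (hij : PebEquiv G S i j) (hjk : PebEquiv G S j k) :
    PebEquiv G S i k :=
  stmt_4_general G S i j k hij hjk
end

section
/- On the path graph P_n (vertices v_1,…,v_n in a line), for any configuration S of p ≤ n pebbles and any configuration D with V(S) = V(D), D is reachable from S if and only if the pebbles appear in the same left-to-right order in S and D; in particular no two pebbles can ever exchange their relative order on a path. -/
open Finset

/-!
A move slides one pebble to an adjacent free vertex, so it never jumps over another pebble and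
the left-to-right order of the pebbles is invariant. Conversely, an injective configuration is
determined by its set of occupied vertices together with that order: the pebble having `k`
pebbles to its left sits on the `k`-th occupied vertex.
-/

section Hasse

variable {α : Type*} [LinearOrder α] {a b x : α}

theorem SimpleGraph.hasse_adj_lt_left_iff (hab : (SimpleGraph.hasse α).Adj a b)
    (hxa : x ≠ a) (hxb : x ≠ b) : x < a ↔ x < b := by
  have key : ∀ {a b : α}, a ⋖ b → x ≠ a → (x < a ↔ x < b) := fun h hxa =>
    ⟨fun hx => hx.trans h.lt, fun hx => (h.le_of_lt hx).lt_of_ne hxa⟩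
  rcases SimpleGraph.hasse_adj.mp hab with h | h
  · exact key h hxa
  · exact (key h hxb).symm

theorem SimpleGraph.hasse_adj_lt_right_iff (hab : (SimpleGraph.hasse α).Adj a b)
    (hxa : x ≠ a) (hxb : x ≠ b) : a < x ↔ b < x := by
  rw [← not_le, ← not_le, hxa.le_iff_lt, hxb.le_iff_lt,
    SimpleGraph.hasse_adj_lt_left_iff hab hxa hxb]

variable {p : ℕ} {S S' : Fin p → α}

theorem Move.lt_iff_lt (h : Move (SimpleGraph.hasse α) S S') (i j : Fin p) :
    S i < S j ↔ S' i < S' j := by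
  obtain ⟨hS, -, k, hadj, hfix, hfree⟩ := h
  have other : ∀ {j}, j ≠ k → S' j = S j ∧ S j ≠ S k ∧ S j ≠ S' k := fun hj =>
    ⟨hfix _ hj, hS.ne hj, hfree _⟩
  rcases eq_or_ne i k with hi | hi <;> rcases eq_or_ne j k with hj | hj
  · simp only [hi, hj, lt_irrefl]
  · obtain ⟨hj', hjk, hjk'⟩ := other hj
    rw [hi, hj']
    exact SimpleGraph.hasse_adj_lt_right_iff hadj hjk hjk'
  · obtain ⟨hi', hik, hik'⟩ := other hi
    rw [hj, hi']
    exact SimpleGraph.hasse_adj_lt_left_iff hadj hik hik'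
  · rw [hfix i hi, hfix j hj]

theorem Reach.lt_iff_lt (h : Reach (SimpleGraph.hasse α) S S') (i j : Fin p) :
    S i < S j ↔ S' i < S' j := by
  induction h with
  | refl => rfl
  | tail _ hmove ih => exact ih.trans (hmove.lt_iff_lt i j)

end Hasse

section Rank

variable {ι α : Type*} [Fintype ι] [LinearOrder α]

theorem Finset.strictMonoOn_card_filter_lt (s : Finset α) :
    StrictMonoOn (fun x => #{y ∈ s | y < x}) s := by
  intro x hx x' hx' hxx'
  refine card_lt_card ((ssubset_iff_of_subset ?_).mpr ⟨x, ?_, ?_⟩)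
  · intro y
    simp only [mem_filter]
    exact fun ⟨hy, hyx⟩ => ⟨hy, hyx.trans hxx'⟩
  · simpa [hxx'] using hx
  · simp

theorem card_filter_lt_image {f : ι → α} (hf : Function.Injective f) (x : α) :
    #{y ∈ univ.image f | y < x} = #{i | f i < x} := by
  rw [filter_image, card_image_of_injective _ hf]

theorem eq_of_range_eq_of_lt_iff_lt {f g : ι → α} (hf : Function.Injective f)
    (hg : Function.Injective g) (hfg : Set.range f = Set.range g)
    (hlt : ∀ i j, f i < f j ↔ g i < g j) : f = g := by
  have himage : univ.image f = univ.image g := by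
    simpa only [← coe_inj, coe_image, coe_univ, Set.image_univ] using hfg
  funext i
  refine (univ.image f).strictMonoOn_card_filter_lt.injOn (by simp) (by simp [himage]) ?_
  rw [card_filter_lt_image hf, himage, card_filter_lt_image hg]
  simp only [hlt]

end Rank

theorem stmt_15_general {n p : ℕ}
    (S D : Fin p → Fin n) (hS : Function.Injective S) (hD : Function.Injective D)
    (hV : Set.range S = Set.range D) :
    Reach (SimpleGraph.pathGraph n) S D ↔ ∀ i j : Fin p, S i < S j ↔ D i < D j :=
  ⟨Reach.lt_iff_lt, fun hlt => eq_of_range_eq_of_lt_iff_lt hS hD hV hlt ▸ .refl⟩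

/-- on the path graph, `D` is reachable from `S` (with the same
occupied vertex set) iff the pebbles appear in the same left-to-right order. -/
theorem stmt_15 {n p : ℕ} (hp : p ≤ n)
    (S D : Fin p → Fin n) (hS : Function.Injective S) (hD : Function.Injective D)
    (hV : Set.range S = Set.range D) :
    Reach (SimpleGraph.pathGraph n) S D ↔ ∀ i j : Fin p, S i < S j ↔ D i < D j :=
  stmt_15_general S D hS hD hV
end
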